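/- Let v¹,…,vⁿ be an orthonormal basis of ℝⁿ, d₀, d₁ ∈ ℝⁿ, α₁,…,αₙ > 0, λ ∈ [0,1], and for i = 1,…,n let μᵢ ∈ [0,1] satisfy 1 - (1-λ)αᵢ^λ ≤ μᵢ ≤ λαᵢ^(λ-1). Define E_λ = {x : ∑ᵢ ⟨x,vⁱ⟩²/αᵢ^(2λ) ≤ 1} and d_λ = ∑ᵢ((1-μᵢ)⟨d₀,vⁱ⟩ + μᵢ⟨d₁,vⁱ⟩)vⁱ. Then (E_0 + d₀) ∩ (E_1 + d₁) ⊆ E_λ + d_λ. -/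

import Mathlib

open scoped RealInnerProductSpace Pointwise

/-- The geometric mean ellipsoid `E_l` with principal axes `v i` and half-lengths `(α i)^l`. -/
def meanEllipsoid {n : ℕ} (v : Fin n → EuclideanSpace ℝ (Fin n)) (α : Fin n → ℝ) (l : ℝ) :
    Set (EuclideanSpace ℝ (Fin n)) :=
  {x | ∑ i, ⟪x, v i⟫ ^ 2 / (α i) ^ (2 * l) ≤ 1}

/-!
Fix an axis `v i` of half-length `α` and let `a, b` be the coordinates of `x - d₀, x - d₁` on it.
The coordinate of `x - d_l` is `(1 - μ) a + μ b`; divided by `α ^ l` it reads `p a + q (b / α)`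
with `p = (1 - μ) / α ^ l ≤ 1 - l` and `q = μ α ^ (1 - l) ≤ l`, and these two bounds are exactly
the constraints on `μ`. By convexity of `t ↦ t ^ 2` its square is at most
`(1 - l) a ^ 2 + l (b / α) ^ 2`. Summing over the axes, the gauge of `x - d_l` in `E_l` is at most
`1 - l` times that of `x - d₀` in `E_0` plus `l` times that of `x - d₁` in `E_1`, hence at most `1`.
-/

lemma sq_add_le_of_abs_le {p q s t : ℝ} (hp : |p| ≤ s) (hq : |q| ≤ t) (hst : s + t ≤ 1)
    (a c : ℝ) : (p * a + q * c) ^ 2 ≤ s * a ^ 2 + t * c ^ 2 := by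
  have hs : 0 ≤ s := (abs_nonneg p).trans hp
  have ht : 0 ≤ t := (abs_nonneg q).trans hq
  have habs : |p * a + q * c| ≤ s * |a| + t * |c| := by
    refine (abs_add_le _ _).trans ?_
    rw [abs_mul, abs_mul]
    gcongr
  calc (p * a + q * c) ^ 2 ≤ (s * |a| + t * |c|) ^ 2 :=
        sq_le_sq' (abs_le.mp habs).1 (abs_le.mp habs).2
    _ ≤ (s + t) * (s * |a| ^ 2 + t * |c| ^ 2) := by
      nlinarith [mul_nonneg (mul_nonneg hs ht) (sq_nonneg (|a| - |c|))]
    _ = (s + t) * (s * a ^ 2 + t * c ^ 2) := by rw [sq_abs, sq_abs]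
    _ ≤ s * a ^ 2 + t * c ^ 2 := by
      nlinarith [mul_nonneg hs (sq_nonneg a), mul_nonneg ht (sq_nonneg c)]

lemma sq_mean_div_rpow_le {α l μ : ℝ} (hα : 0 < α) (hμ : μ ∈ Set.Icc (0 : ℝ) 1)
    (hμ1 : 1 - (1 - l) * α ^ l ≤ μ) (hμ2 : μ ≤ l * α ^ (l - 1)) (a b : ℝ) :
    ((1 - μ) * a + μ * b) ^ 2 / α ^ (2 * l) ≤ (1 - l) * a ^ 2 + l * (b ^ 2 / α ^ 2) := by
  have hαl : 0 < α ^ l := Real.rpow_pos_of_pos hα l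
  have hp : |(1 - μ) / α ^ l| ≤ 1 - l := by
    rw [abs_of_nonneg (div_nonneg (by linarith [hμ.2]) hαl.le), div_le_iff₀ hαl]
    linarith
  have hq : |μ * α ^ (1 - l)| ≤ l := by
    rw [abs_of_nonneg (mul_nonneg hμ.1 (Real.rpow_nonneg hα.le _))]
    calc μ * α ^ (1 - l) ≤ l * α ^ (l - 1) * α ^ (1 - l) := by gcongr
      _ = l := by rw [mul_assoc, ← Real.rpow_add hα]; norm_num
  have hrescale : ((1 - μ) * a + μ * b) ^ 2 / α ^ (2 * l)
      = ((1 - μ) / α ^ l * a + μ * α ^ (1 - l) * (b / α)) ^ 2 := by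
    have h2l : α ^ (2 * l) = (α ^ l) ^ 2 := by
      rw [← Real.rpow_natCast, ← Real.rpow_mul hα.le, mul_comm]; norm_num
    rw [h2l, Real.rpow_sub hα, Real.rpow_one, ← div_pow]
    field_simp
  rw [hrescale, ← div_pow]
  exact sq_add_le_of_abs_le hp hq (by linarith) a (b / α)

lemma mem_add_singleton_iff {E : Type*} [AddGroup E] {s : Set E} {x d : E} :
    x ∈ s + {d} ↔ x - d ∈ s := by
  simp [Set.add_singleton, sub_eq_add_neg]

section

variable {n : ℕ} {v : Fin n → EuclideanSpace ℝ (Fin n)} {α : Fin n → ℝ}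

lemma meanEllipsoid_zero : meanEllipsoid v α 0 = {x | ∑ i, ⟪x, v i⟫ ^ 2 ≤ 1} := by
  simp [meanEllipsoid]

lemma meanEllipsoid_one :
    meanEllipsoid v α 1 = {x | ∑ i, ⟪x, v i⟫ ^ 2 / α i ^ 2 ≤ 1} := by
  simp [meanEllipsoid]

end

theorem stmt_10_general {n : ℕ} (v : Fin n → EuclideanSpace ℝ (Fin n))
    (hv : Orthonormal ℝ v)
    (d₀ d₁ : EuclideanSpace ℝ (Fin n))
    (α : Fin n → ℝ) (hα : ∀ i, 0 < α i) (l : ℝ) (hl : l ∈ Set.Icc (0:ℝ) 1)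
    (μ : Fin n → ℝ) (hμ : ∀ i, μ i ∈ Set.Icc (0:ℝ) 1)
    (hμ1 : ∀ i, 1 - (1 - l) * (α i) ^ l ≤ μ i) (hμ2 : ∀ i, μ i ≤ l * (α i) ^ (l - 1))
    (dl : EuclideanSpace ℝ (Fin n))
    (hdl : dl = ∑ i, ((1 - μ i) * ⟪d₀, v i⟫ + μ i * ⟪d₁, v i⟫) • v i) :
    (meanEllipsoid v α 0 + ({d₀} : Set (EuclideanSpace ℝ (Fin n)))) ∩
        (meanEllipsoid v α 1 + ({d₁} : Set (EuclideanSpace ℝ (Fin n)))) ⊆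
      meanEllipsoid v α l + ({dl} : Set (EuclideanSpace ℝ (Fin n))) := by
  rintro x ⟨hx₀, hx₁⟩
  rw [mem_add_singleton_iff, meanEllipsoid_zero, Set.mem_ofPred_eq] at hx₀
  rw [mem_add_singleton_iff, meanEllipsoid_one, Set.mem_ofPred_eq] at hx₁
  rw [mem_add_singleton_iff, meanEllipsoid, Set.mem_ofPred_eq]
  have hcoord :
      ∀ i, ⟪x - dl, v i⟫ = (1 - μ i) * ⟪x - d₀, v i⟫ + μ i * ⟪x - d₁, v i⟫ := by
    intro i
    simp only [inner_sub_left, hdl, hv.inner_left_fintype, conj_trivial]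
    ring
  calc ∑ i, ⟪x - dl, v i⟫ ^ 2 / α i ^ (2 * l)
      ≤ ∑ i, ((1 - l) * ⟪x - d₀, v i⟫ ^ 2 + l * (⟪x - d₁, v i⟫ ^ 2 / α i ^ 2)) :=
        Finset.sum_le_sum fun i _ => hcoord i ▸
          sq_mean_div_rpow_le (hα i) (hμ i) (hμ1 i) (hμ2 i) _ _
    _ = (1 - l) * ∑ i, ⟪x - d₀, v i⟫ ^ 2
          + l * ∑ i, ⟪x - d₁, v i⟫ ^ 2 / α i ^ 2 := by
        rw [Finset.sum_add_distrib, Finset.mul_sum, Finset.mul_sum]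
    _ ≤ 1 := by nlinarith [hl.1, hl.2]

theorem stmt_10 {n : ℕ} (v : Fin n → EuclideanSpace ℝ (Fin n))
    (hv : Orthonormal ℝ v) (hv' : Submodule.span ℝ (Set.range v) = ⊤)
    (d₀ d₁ : EuclideanSpace ℝ (Fin n))
    (α : Fin n → ℝ) (hα : ∀ i, 0 < α i) (l : ℝ) (hl : l ∈ Set.Icc (0:ℝ) 1)
    (μ : Fin n → ℝ) (hμ : ∀ i, μ i ∈ Set.Icc (0:ℝ) 1)
    (hμ1 : ∀ i, 1 - (1 - l) * (α i) ^ l ≤ μ i) (hμ2 : ∀ i, μ i ≤ l * (α i) ^ (l - 1))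
    (dl : EuclideanSpace ℝ (Fin n))
    (hdl : dl = ∑ i, ((1 - μ i) * ⟪d₀, v i⟫ + μ i * ⟪d₁, v i⟫) • v i) :
    (meanEllipsoid v α 0 + ({d₀} : Set (EuclideanSpace ℝ (Fin n)))) ∩
        (meanEllipsoid v α 1 + ({d₁} : Set (EuclideanSpace ℝ (Fin n)))) ⊆
      meanEllipsoid v α l + ({dl} : Set (EuclideanSpace ℝ (Fin n))) :=
  stmt_10_general v hv d₀ d₁ α hα l hl μ hμ hμ1 hμ2 dl hdl
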